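/- Let f = (f¹,f²,f³) : ℝ³ → ℝ³ be a smooth contact map of the first Heisenberg group and ω₁, ω₂ : ℝ³ → ℝ smooth. Set λ(f) := Xf¹·Yf² − Xf²·Yf¹, E := (ω₁ ∘ f)·Yf¹ + (ω₂ ∘ f)·Yf², F := (ω₁ ∘ f)·Xf¹ + (ω₂ ∘ f)·Xf². Then X(λ(f)·E) − Y(λ(f)·F) = λ(f)² · ((Xω₂ − Yω₁) ∘ f). (This expresses that the pullback by f commutes with the Rumin differential d_Q in top degree: for ω = ω₁ dx∧θ + ω₂ dy∧θ one has f^* d_Q ω = d_Q f^* ω.) -/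

import Mathlib

/-- The horizontal vector field `X g := ∂_x g − (y/2)·∂_t g` on `ℝ³` with coordinates
`(x, y, t) = (p 0, p 1, p 2)`. -/
noncomputable def Xd (g : (Fin 3 → ℝ) → ℝ) : (Fin 3 → ℝ) → ℝ :=
  fun p => fderiv ℝ g p (Pi.single 0 1) - p 1 / 2 * fderiv ℝ g p (Pi.single 2 1)

/-- The horizontal vector field `Y g := ∂_y g + (x/2)·∂_t g`. -/
noncomputable def Yd (g : (Fin 3 → ℝ) → ℝ) : (Fin 3 → ℝ) → ℝ :=
  fun p => fderiv ℝ g p (Pi.single 1 1) + p 0 / 2 * fderiv ℝ g p (Pi.single 2 1)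

/-- The vertical vector field `T g := ∂_t g`. -/
noncomputable def Td (g : (Fin 3 → ℝ) → ℝ) : (Fin 3 → ℝ) → ℝ :=
  fun p => fderiv ℝ g p (Pi.single 2 1)

/-- A map `f = (f¹, f², f³) : ℝ³ → ℝ³` is a contact map of the first Heisenberg group if
`Xf³ + (1/2)f²·Xf¹ − (1/2)f¹·Xf² = 0` and `Yf³ + (1/2)f²·Yf¹ − (1/2)f¹·Yf² = 0`
identically. -/
def IsContact3 (f : (Fin 3 → ℝ) → (Fin 3 → ℝ)) : Prop :=
  (∀ p, Xd (fun q => f q 2) p + (1/2) * f p 1 * Xd (fun q => f q 0) p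
      - (1/2) * f p 0 * Xd (fun q => f q 1) p = 0)
  ∧ (∀ p, Yd (fun q => f q 2) p + (1/2) * f p 1 * Yd (fun q => f q 0) p
      - (1/2) * f p 0 * Yd (fun q => f q 1) p = 0)

/-- `λ(f) := Xf¹·Yf² − Xf²·Yf¹`. -/
noncomputable def lam3 (f : (Fin 3 → ℝ) → (Fin 3 → ℝ)) : (Fin 3 → ℝ) → ℝ :=
  fun p => Xd (fun q => f q 0) p * Yd (fun q => f q 1) p
    - Xd (fun q => f q 1) p * Yd (fun q => f q 0) p

noncomputable def pd (i : Fin 3) (g : (Fin 3 → ℝ) → ℝ) : (Fin 3 → ℝ) → ℝ :=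
  fun p => fderiv ℝ g p (Pi.single i 1)

@[fun_prop]
lemma contDiff_pd (i : Fin 3) {g : (Fin 3 → ℝ) → ℝ} (hg : ContDiff ℝ (⊤ : ℕ∞) g) :
    ContDiff ℝ (⊤ : ℕ∞) (pd i g) := by
  unfold pd
  exact (ContinuousLinearMap.apply ℝ ℝ (Pi.single i 1)).contDiff.comp (hg.fderiv_right (m := (⊤ : ℕ∞)) (by simp))

@[fun_prop]
lemma diff_pd (i : Fin 3) {g : (Fin 3 → ℝ) → ℝ} (hg : ContDiff ℝ (⊤ : ℕ∞) g) :
    Differentiable ℝ (pd i g) :=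
  (contDiff_pd i hg).differentiable (by simp)

lemma pd_add {g h : (Fin 3 → ℝ) → ℝ} {p : Fin 3 → ℝ} (i : Fin 3)
    (hg : DifferentiableAt ℝ g p) (hh : DifferentiableAt ℝ h p) :
    pd i (fun q => g q + h q) p = pd i g p + pd i h p := by
  simp [pd, fderiv_fun_add hg hh]

lemma pd_sub {g h : (Fin 3 → ℝ) → ℝ} {p : Fin 3 → ℝ} (i : Fin 3)
    (hg : DifferentiableAt ℝ g p) (hh : DifferentiableAt ℝ h p) :
    pd i (fun q => g q - h q) p = pd i g p - pd i h p := by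
  simp [pd, fderiv_fun_sub hg hh]

lemma pd_mul {g h : (Fin 3 → ℝ) → ℝ} {p : Fin 3 → ℝ} (i : Fin 3)
    (hg : DifferentiableAt ℝ g p) (hh : DifferentiableAt ℝ h p) :
    pd i (fun q => g q * h q) p = g p * pd i h p + h p * pd i g p := by
  simp [pd, fderiv_fun_mul hg hh]

lemma pd_const_mul {g : (Fin 3 → ℝ) → ℝ} {p : Fin 3 → ℝ} (i : Fin 3) (r : ℝ)
    (hg : DifferentiableAt ℝ g p) :
    pd i (fun q => r * g q) p = r * pd i g p := by
  simp [pd, fderiv_const_mul hg r]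

lemma pd_coord (i j : Fin 3) (p : Fin 3 → ℝ) :
    pd i (fun q => q j) p = if j = i then 1 else 0 := by
  have : fderiv ℝ (fun q : Fin 3 → ℝ => q j) p = ContinuousLinearMap.proj j :=
    (ContinuousLinearMap.proj j : (Fin 3 → ℝ) →L[ℝ] ℝ).fderiv
  simp [pd, this, Pi.single_apply]

@[fun_prop]
lemma diff_coord (j : Fin 3) : Differentiable ℝ (fun q : Fin 3 → ℝ => q j) :=
  (ContinuousLinearMap.proj j : (Fin 3 → ℝ) →L[ℝ] ℝ).differentiable

@[fun_prop]
lemma diff_coord_half (j : Fin 3) : Differentiable ℝ (fun q : Fin 3 → ℝ => q j / 2) := by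
  have h : (fun q : Fin 3 → ℝ => q j / 2) = fun q => (2:ℝ)⁻¹ * q j := by funext q; ring
  rw [h]; exact (diff_coord j).const_mul _

lemma pd_coord_half (i j : Fin 3) (p : Fin 3 → ℝ) :
    pd i (fun q => q j / 2) p = (if j = i then 1 else 0) / 2 := by
  have h : (fun q : Fin 3 → ℝ => q j / 2) = fun q => (2 : ℝ)⁻¹ * q j := by
    funext q; ring
  rw [h, pd_const_mul i _ ((diff_coord j).differentiableAt), pd_coord]
  ring

lemma pd_comm {g : (Fin 3 → ℝ) → ℝ} (hg : ContDiff ℝ (⊤ : ℕ∞) g) (i j : Fin 3) (p : Fin 3 → ℝ) :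
    pd i (pd j g) p = pd j (pd i g) p := by
  have hsymm : IsSymmSndFDerivAt ℝ g p := hg.contDiffAt.isSymmSndFDerivAt (by rw [minSmoothness_of_isRCLikeNormedField]; exact WithTop.coe_le_coe.mpr (le_top : (2 : ℕ∞) ≤ ⊤))
  have hd : DifferentiableAt ℝ (fderiv ℝ g) p :=
    ((hg.fderiv_right (m := (⊤ : ℕ∞)) (by simp)).differentiable (by simp)).differentiableAt
  have key : ∀ v w : Fin 3 → ℝ,
      fderiv ℝ (fun x => fderiv ℝ g x v) p w = fderiv ℝ (fderiv ℝ g) p w v := by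
    intro v w
    rw [fderiv_clm_apply hd (differentiableAt_const v)]
    simp
  show fderiv ℝ (fun x => fderiv ℝ g x (Pi.single j 1)) p (Pi.single i 1) =
    fderiv ℝ (fun x => fderiv ℝ g x (Pi.single i 1)) p (Pi.single j 1)
  rw [key, key, hsymm]

-- Xd layer
lemma Xd_pd (g : (Fin 3 → ℝ) → ℝ) : Xd g = fun q => pd 0 g q - q 1 / 2 * pd 2 g q := rfl
lemma Yd_pd (g : (Fin 3 → ℝ) → ℝ) : Yd g = fun q => pd 1 g q + q 0 / 2 * pd 2 g q := rfl
lemma Td_pd (g : (Fin 3 → ℝ) → ℝ) : Td g = fun q => pd 2 g q := rfl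

@[fun_prop]
lemma contDiff_Xd {g : (Fin 3 → ℝ) → ℝ} (hg : ContDiff ℝ (⊤ : ℕ∞) g) : ContDiff ℝ (⊤ : ℕ∞) (Xd g) := by
  have h : Xd g = fun q => pd 0 g q - (2 : ℝ)⁻¹ * (q 1 * pd 2 g q) := by
    funext q; show pd 0 g q - q 1 / 2 * pd 2 g q = _; ring
  rw [h]; fun_prop

@[fun_prop]
lemma contDiff_Yd {g : (Fin 3 → ℝ) → ℝ} (hg : ContDiff ℝ (⊤ : ℕ∞) g) : ContDiff ℝ (⊤ : ℕ∞) (Yd g) := by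
  have h : Yd g = fun q => pd 1 g q + (2 : ℝ)⁻¹ * (q 0 * pd 2 g q) := by
    funext q; show pd 1 g q + q 0 / 2 * pd 2 g q = _; ring
  rw [h]; fun_prop

@[fun_prop]
lemma contDiff_Td {g : (Fin 3 → ℝ) → ℝ} (hg : ContDiff ℝ (⊤ : ℕ∞) g) : ContDiff ℝ (⊤ : ℕ∞) (Td g) := by
  rw [Td_pd]; fun_prop

@[fun_prop]
lemma diff_Xd {g : (Fin 3 → ℝ) → ℝ} (hg : ContDiff ℝ (⊤ : ℕ∞) g) : Differentiable ℝ (Xd g) :=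
  (contDiff_Xd hg).differentiable (by simp)
@[fun_prop]
lemma diff_Yd {g : (Fin 3 → ℝ) → ℝ} (hg : ContDiff ℝ (⊤ : ℕ∞) g) : Differentiable ℝ (Yd g) :=
  (contDiff_Yd hg).differentiable (by simp)
@[fun_prop]
lemma diff_Td {g : (Fin 3 → ℝ) → ℝ} (hg : ContDiff ℝ (⊤ : ℕ∞) g) : Differentiable ℝ (Td g) :=
  (contDiff_Td hg).differentiable (by simp)

lemma Xd_add {g h : (Fin 3 → ℝ) → ℝ} {p : Fin 3 → ℝ}
    (hg : DifferentiableAt ℝ g p) (hh : DifferentiableAt ℝ h p) :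
    Xd (fun q => g q + h q) p = Xd g p + Xd h p := by
  show pd 0 _ p - _ * pd 2 _ p = _
  rw [pd_add 0 hg hh, pd_add 2 hg hh]; show _ = pd 0 g p - _ * pd 2 g p + (pd 0 h p - _ * pd 2 h p)
  ring

lemma Xd_mul {g h : (Fin 3 → ℝ) → ℝ} {p : Fin 3 → ℝ}
    (hg : DifferentiableAt ℝ g p) (hh : DifferentiableAt ℝ h p) :
    Xd (fun q => g q * h q) p = g p * Xd h p + h p * Xd g p := by
  show pd 0 _ p - _ * pd 2 _ p = _
  rw [pd_mul 0 hg hh, pd_mul 2 hg hh]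
  show _ = g p * (pd 0 h p - _ * pd 2 h p) + h p * (pd 0 g p - _ * pd 2 g p)
  ring

lemma Xd_sub {g h : (Fin 3 → ℝ) → ℝ} {p : Fin 3 → ℝ}
    (hg : DifferentiableAt ℝ g p) (hh : DifferentiableAt ℝ h p) :
    Xd (fun q => g q - h q) p = Xd g p - Xd h p := by
  show pd 0 _ p - _ * pd 2 _ p = _
  rw [pd_sub 0 hg hh, pd_sub 2 hg hh]; show _ = pd 0 g p - _ * pd 2 g p - (pd 0 h p - _ * pd 2 h p)
  ring

lemma Xd_const_mul {g : (Fin 3 → ℝ) → ℝ} {p : Fin 3 → ℝ} (r : ℝ)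
    (hg : DifferentiableAt ℝ g p) :
    Xd (fun q => r * g q) p = r * Xd g p := by
  show pd 0 _ p - _ * pd 2 _ p = _
  rw [pd_const_mul 0 r hg, pd_const_mul 2 r hg]
  show _ = r * (pd 0 g p - _ * pd 2 g p)
  ring

lemma Yd_add {g h : (Fin 3 → ℝ) → ℝ} {p : Fin 3 → ℝ}
    (hg : DifferentiableAt ℝ g p) (hh : DifferentiableAt ℝ h p) :
    Yd (fun q => g q + h q) p = Yd g p + Yd h p := by
  show pd 1 _ p + _ * pd 2 _ p = _
  rw [pd_add 1 hg hh, pd_add 2 hg hh]; show _ = pd 1 g p + _ * pd 2 g p + (pd 1 h p + _ * pd 2 h p)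
  ring

lemma Yd_mul {g h : (Fin 3 → ℝ) → ℝ} {p : Fin 3 → ℝ}
    (hg : DifferentiableAt ℝ g p) (hh : DifferentiableAt ℝ h p) :
    Yd (fun q => g q * h q) p = g p * Yd h p + h p * Yd g p := by
  show pd 1 _ p + _ * pd 2 _ p = _
  rw [pd_mul 1 hg hh, pd_mul 2 hg hh]
  show _ = g p * (pd 1 h p + _ * pd 2 h p) + h p * (pd 1 g p + _ * pd 2 g p)
  ring

lemma Yd_sub {g h : (Fin 3 → ℝ) → ℝ} {p : Fin 3 → ℝ}
    (hg : DifferentiableAt ℝ g p) (hh : DifferentiableAt ℝ h p) :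
    Yd (fun q => g q - h q) p = Yd g p - Yd h p := by
  show pd 1 _ p + _ * pd 2 _ p = _
  rw [pd_sub 1 hg hh, pd_sub 2 hg hh]; show _ = pd 1 g p + _ * pd 2 g p - (pd 1 h p + _ * pd 2 h p)
  ring

lemma Yd_const_mul {g : (Fin 3 → ℝ) → ℝ} {p : Fin 3 → ℝ} (r : ℝ)
    (hg : DifferentiableAt ℝ g p) :
    Yd (fun q => r * g q) p = r * Yd g p := by
  show pd 1 _ p + _ * pd 2 _ p = _
  rw [pd_const_mul 1 r hg, pd_const_mul 2 r hg]
  show _ = r * (pd 1 g p + _ * pd 2 g p)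
  ring

lemma Td_mul {g h : (Fin 3 → ℝ) → ℝ} {p : Fin 3 → ℝ}
    (hg : DifferentiableAt ℝ g p) (hh : DifferentiableAt ℝ h p) :
    Td (fun q => g q * h q) p = g p * Td h p + h p * Td g p := pd_mul 2 hg hh

lemma Td_sub {g h : (Fin 3 → ℝ) → ℝ} {p : Fin 3 → ℝ}
    (hg : DifferentiableAt ℝ g p) (hh : DifferentiableAt ℝ h p) :
    Td (fun q => g q - h q) p = Td g p - Td h p := pd_sub 2 hg hh

lemma Td_const_mul {g : (Fin 3 → ℝ) → ℝ} {p : Fin 3 → ℝ} (r : ℝ)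
    (hg : DifferentiableAt ℝ g p) :
    Td (fun q => r * g q) p = r * Td g p := pd_const_mul 2 r hg

lemma XY_comm {g : (Fin 3 → ℝ) → ℝ} (hg : ContDiff ℝ (⊤ : ℕ∞) g) (p : Fin 3 → ℝ) :
    Xd (Yd g) p - Yd (Xd g) p = Td g p := by
  simp only [Xd_pd, Yd_pd, Td_pd]
  simp (disch := fun_prop) only [pd_add, pd_sub, pd_mul, pd_coord_half, pd_coord]
  norm_num [Fin.ext_iff]
  linear_combination pd_comm hg 0 1 p + (p 0 / 2) * pd_comm hg 0 2 p
    + (p 1 / 2) * pd_comm hg 1 2 p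

lemma TX_comm {g : (Fin 3 → ℝ) → ℝ} (hg : ContDiff ℝ (⊤ : ℕ∞) g) (p : Fin 3 → ℝ) :
    Td (Xd g) p = Xd (Td g) p := by
  simp only [Xd_pd, Td_pd]
  simp (disch := fun_prop) only [pd_add, pd_sub, pd_mul, pd_coord_half, pd_coord]
  norm_num [Fin.ext_iff]
  linear_combination pd_comm hg 2 0 p - (p 1 / 2) * pd_comm hg 2 2 p

lemma TY_comm {g : (Fin 3 → ℝ) → ℝ} (hg : ContDiff ℝ (⊤ : ℕ∞) g) (p : Fin 3 → ℝ) :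
    Td (Yd g) p = Yd (Td g) p := by
  simp only [Yd_pd, Td_pd]
  simp (disch := fun_prop) only [pd_add, pd_sub, pd_mul, pd_coord_half, pd_coord]
  norm_num [Fin.ext_iff]
  linear_combination pd_comm hg 2 1 p + (p 0 / 2) * pd_comm hg 2 2 p


lemma pd_comp {f : (Fin 3 → ℝ) → (Fin 3 → ℝ)} {ω : (Fin 3 → ℝ) → ℝ}
    (hf : ContDiff ℝ (⊤ : ℕ∞) f) (hω : ContDiff ℝ (⊤ : ℕ∞) ω) (i : Fin 3) (p : Fin 3 → ℝ) :
    pd i (fun q => ω (f q)) p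
      = pd 0 ω (f p) * pd i (fun q => f q 0) p
      + pd 1 ω (f p) * pd i (fun q => f q 1) p
      + pd 2 ω (f p) * pd i (fun q => f q 2) p := by
  have hfd : DifferentiableAt ℝ f p := (hf.differentiable (by simp)).differentiableAt
  have hωd : DifferentiableAt ℝ ω (f p) := (hω.differentiable (by simp)).differentiableAt
  have hcomp : fderiv ℝ (fun q => ω (f q)) p = (fderiv ℝ ω (f p)).comp (fderiv ℝ f p) :=
    fderiv_comp p hωd hfd
  have hcoord : ∀ j : Fin 3, fderiv ℝ (fun q => f q j) p
      = (ContinuousLinearMap.proj j : (Fin 3 → ℝ) →L[ℝ] ℝ).comp (fderiv ℝ f p) := by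
    intro j
    have := fderiv_comp p
      ((ContinuousLinearMap.proj j : (Fin 3 → ℝ) →L[ℝ] ℝ).differentiableAt) hfd
    rw [ContinuousLinearMap.fderiv] at this
    exact this
  set v : Fin 3 → ℝ := fderiv ℝ f p (Pi.single i 1) with hv
  have hdecomp : v = v 0 • (Pi.single 0 1 : Fin 3 → ℝ) + v 1 • (Pi.single 1 1 : Fin 3 → ℝ)
      + v 2 • (Pi.single 2 1 : Fin 3 → ℝ) := by
    funext k
    fin_cases k <;> simp [Pi.single_apply]
  have hvj : ∀ j : Fin 3, pd i (fun q => f q j) p = v j := by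
    intro j
    show fderiv ℝ (fun q => f q j) p (Pi.single i 1) = v j
    rw [hcoord j]
    simp [hv]
  show fderiv ℝ (fun q => ω (f q)) p (Pi.single i 1) = _
  rw [hcomp]
  simp only [ContinuousLinearMap.comp_apply, ← hv]
  rw [hdecomp]
  simp only [map_add, map_smul, smul_eq_mul]
  rw [hvj 0, hvj 1, hvj 2]
  simp only [pd]
  ring

/-- For a smooth contact map `f` of `ℍ¹` and smooth `ω₁, ω₂ : ℝ³ → ℝ`, with
`E := (ω₁ ∘ f)·Yf¹ + (ω₂ ∘ f)·Yf²` and `F := (ω₁ ∘ f)·Xf¹ + (ω₂ ∘ f)·Xf²`, one has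
`X(λ(f)·E) − Y(λ(f)·F) = λ(f)² · ((Xω₂ − Yω₁) ∘ f)`
(the pullback by `f` commutes with `d_Q` in top degree). -/
theorem pullback_dQ_top_degree (f : (Fin 3 → ℝ) → (Fin 3 → ℝ))
    (hf : ContDiff ℝ (⊤ : ℕ∞) f) (hc : IsContact3 f)
    (ω₁ ω₂ : (Fin 3 → ℝ) → ℝ) (hω₁ : ContDiff ℝ (⊤ : ℕ∞) ω₁) (hω₂ : ContDiff ℝ (⊤ : ℕ∞) ω₂)
    (E F : (Fin 3 → ℝ) → ℝ)
    (hE : E = fun q => ω₁ (f q) * Yd (fun r => f r 0) q + ω₂ (f q) * Yd (fun r => f r 1) q)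
    (hF : F = fun q => ω₁ (f q) * Xd (fun r => f r 0) q + ω₂ (f q) * Xd (fun r => f r 1) q)
    (p : Fin 3 → ℝ) :
    Xd (fun q => lam3 f q * E q) p - Yd (fun q => lam3 f q * F q) p
      = (lam3 f p) ^ 2 * (Xd ω₂ (f p) - Yd ω₁ (f p)) := by
  subst hE hF
  have hdf : Differentiable ℝ f := hf.differentiable (by simp)
  have hf0 : ContDiff ℝ (⊤ : ℕ∞) (fun q => f q 0) := by fun_prop
  have hf1 : ContDiff ℝ (⊤ : ℕ∞) (fun q => f q 1) := by fun_prop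
  have hf2 : ContDiff ℝ (⊤ : ℕ∞) (fun q => f q 2) := by fun_prop
  have hdω₁ : Differentiable ℝ ω₁ := hω₁.differentiable (by simp)
  have hdω₂ : Differentiable ℝ ω₂ := hω₂.differentiable (by simp)
  -- contact conditions as function identities
  have hC1 : Xd (fun r => f r 2)
      = fun q => (1/2) * (f q 0 * Xd (fun r => f r 1) q - f q 1 * Xd (fun r => f r 0) q) := by
    funext q
    have h := hc.1 q
    linarith
  have hC2 : Yd (fun r => f r 2)
      = fun q => (1/2) * (f q 0 * Yd (fun r => f r 1) q - f q 1 * Yd (fun r => f r 0) q) := by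
    funext q
    have h := hc.2 q
    linarith
  -- T f³ in terms of λ
  have hS1 : Td (fun r => f r 2)
      = fun q => (Xd (fun r => f r 0) q * Yd (fun r => f r 1) q
          - Xd (fun r => f r 1) q * Yd (fun r => f r 0) q)
        + (1/2) * (f q 0 * Td (fun r => f r 1) q - f q 1 * Td (fun r => f r 0) q) := by
    funext q
    have h := XY_comm hf2 q
    rw [hC1, hC2] at h
    simp (disch := fun_prop) only [Xd_const_mul, Xd_sub, Xd_mul, Yd_const_mul, Yd_sub,
      Yd_mul] at h
    linear_combination - h + (1/2) * f q 0 * XY_comm hf1 q - (1/2) * f q 1 * XY_comm hf0 q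
  -- X λ and Y λ
  have hS2 : ∀ q, Xd (fun r => Xd (fun s => f s 0) r * Yd (fun s => f s 1) r
        - Xd (fun s => f s 1) r * Yd (fun s => f s 0) r) q
      = Xd (fun r => f r 1) q * Td (fun r => f r 0) q
        - Xd (fun r => f r 0) q * Td (fun r => f r 1) q := by
    intro q
    have h := TX_comm hf2 q
    rw [hC1, hS1] at h
    simp (disch := fun_prop) only [Td_const_mul, Td_sub, Td_mul, Xd_add, Xd_const_mul,
      Xd_sub, Xd_mul] at h
    simp (disch := fun_prop) only [Xd_sub, Xd_mul]
    linear_combination - h + (1/2) * f q 0 * TX_comm hf1 q - (1/2) * f q 1 * TX_comm hf0 q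
  have hS3 : ∀ q, Yd (fun r => Xd (fun s => f s 0) r * Yd (fun s => f s 1) r
        - Xd (fun s => f s 1) r * Yd (fun s => f s 0) r) q
      = Yd (fun r => f r 1) q * Td (fun r => f r 0) q
        - Yd (fun r => f r 0) q * Td (fun r => f r 1) q := by
    intro q
    have h := TY_comm hf2 q
    rw [hC2, hS1] at h
    simp (disch := fun_prop) only [Td_const_mul, Td_sub, Td_mul, Yd_add, Yd_const_mul,
      Yd_sub, Yd_mul] at h
    simp (disch := fun_prop) only [Yd_sub, Yd_mul]
    linear_combination - h + (1/2) * f q 0 * TY_comm hf1 q - (1/2) * f q 1 * TY_comm hf0 q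
  -- chain rule for contact maps
  have hChX : ∀ ω : (Fin 3 → ℝ) → ℝ, ContDiff ℝ (⊤ : ℕ∞) ω → ∀ q,
      Xd (fun r => ω (f r)) q
        = Xd ω (f q) * Xd (fun r => f r 0) q + Yd ω (f q) * Xd (fun r => f r 1) q := by
    intro ω hω q
    have h0 := pd_comp hf hω 0 q
    have h2 := pd_comp hf hω 2 q
    have hcq := hc.1 q
    simp only [Xd_pd, Yd_pd] at hcq ⊢
    linear_combination h0 - (q 1 / 2) * h2 + pd 2 ω (f q) * hcq
  have hChY : ∀ ω : (Fin 3 → ℝ) → ℝ, ContDiff ℝ (⊤ : ℕ∞) ω → ∀ q,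
      Yd (fun r => ω (f r)) q
        = Xd ω (f q) * Yd (fun r => f r 0) q + Yd ω (f q) * Yd (fun r => f r 1) q := by
    intro ω hω q
    have h1 := pd_comp hf hω 1 q
    have h2 := pd_comp hf hω 2 q
    have hcq := hc.2 q
    simp only [Xd_pd, Yd_pd] at hcq ⊢
    linear_combination h1 + (q 0 / 2) * h2 + pd 2 ω (f q) * hcq
  -- final computation
  have hlam : lam3 f = fun r => Xd (fun s => f s 0) r * Yd (fun s => f s 1) r
      - Xd (fun s => f s 1) r * Yd (fun s => f s 0) r := rfl
  rw [hlam]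
  have hs2 := hS2 p
  have hs3 := hS3 p
  simp (disch := fun_prop) only [Xd_sub, Xd_mul] at hs2
  simp (disch := fun_prop) only [Yd_sub, Yd_mul] at hs3
  have hch1 := hChX ω₁ hω₁ p
  have hch2 := hChX ω₂ hω₂ p
  have hch3 := hChY ω₁ hω₁ p
  have hch4 := hChY ω₂ hω₂ p
  have hk1 := XY_comm hf0 p
  have hk2 := XY_comm hf1 p
  simp (disch := fun_prop) only [Xd_mul, Xd_add, Xd_sub, Yd_mul, Yd_add, Yd_sub]
  set A := Xd (fun r => f r 0) p
  set B := Xd (fun r => f r 1) p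
  set C := Yd (fun r => f r 0) p
  set D := Yd (fun r => f r 1) p
  linear_combination ((A*D - B*C) * ω₁ (f p)) * hk1 + ((A*D - B*C) * ω₂ (f p)) * hk2
    + ((A*D - B*C) * C) * hch1 + ((A*D - B*C) * D) * hch2
    - ((A*D - B*C) * A) * hch3 - ((A*D - B*C) * B) * hch4
    + (ω₁ (f p) * C + ω₂ (f p) * D) * hs2 - (ω₁ (f p) * A + ω₂ (f p) * B) * hs3
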